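/- There is no assignment τ ↦ ρ_τ of arithmetic sentences to arithmetic sentences satisfying all three of: (Independence) if PA+τ is consistent then so are PA+τ+ρ_τ and PA+τ+¬ρ_τ; (Extensionality) if PA proves τ ↔ σ then PA proves ρ_τ ↔ ρ_σ; (Monotonicity) if PA proves τ → σ then PA proves ρ_τ → ρ_σ. In fact, independence plus monotonicity alone already yield a contradiction, assuming PA is consistent. -/

import Mathlib

/-!
Take `ρ₀ = ρ ⊤`. Independence at `⊤` makes `PA + ∼ρ₀` consistent, and independence at `∼ρ₀`
makes `PA + ∼ρ₀ + ρ (∼ρ₀)` consistent. But `PA ⊢ ∼ρ₀ → ⊤`, so monotonicity gives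
`PA ⊢ ρ (∼ρ₀) → ρ₀`, which is refuted by any model of the latter theory.
-/

open FirstOrder Language

namespace FirstOrder.Language.Theory

variable {L : Language} {T : L.Theory} {φ ψ : L.Sentence}

theorem models_top : T ⊨ᵇ (⊤ : L.Sentence) :=
  fun _ _ _ => BoundedFormula.realize_top.2 trivial

theorem models_imp_of_models (h : T ⊨ᵇ ψ) : T ⊨ᵇ (φ ⟹ ψ) :=
  fun M v xs => BoundedFormula.realize_imp.2 fun _ => h M v xs

theorem IsSatisfiable.union_singleton_of_models (hT : T.IsSatisfiable) (h : T ⊨ᵇ φ) :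
    (T ∪ {φ}).IsSatisfiable := by
  obtain ⟨M⟩ := hT
  have : M ⊨ T ∪ {φ} :=
    model_union_iff.2 ⟨M.is_model, model_singleton_iff.2 (h.realize_sentence M)⟩
  exact Model.isSatisfiable M

theorem not_isSatisfiable_union_of_models_imp (h : T ⊨ᵇ (φ ⟹ ψ)) :
    ¬ (T ∪ {∼ψ, φ}).IsSatisfiable := by
  rintro ⟨M⟩
  obtain ⟨_, hnψ, hφ⟩ : M ⊨ T ∧ M ⊨ ∼ψ ∧ M ⊨ φ := by
    simpa only [model_union_iff, model_insert_iff, model_singleton_iff] using M.is_model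
  exact (Sentence.realize_not M).1 hnψ (h.realize_sentence M hφ)

end FirstOrder.Language.Theory

/-- Consistency is rendered, via the completeness theorem, as satisfiability, and provability
as semantic consequence `⊨ᵇ`. -/
theorem no_independent_monotone_operator
    {L : FirstOrder.Language} (PA : L.Theory) (hPA : PA.IsSatisfiable) :
    ¬ ∃ ρ : L.Sentence → L.Sentence,
      (∀ τ : L.Sentence, (PA ∪ {τ}).IsSatisfiable →
        (PA ∪ {τ, ρ τ}).IsSatisfiable ∧ (PA ∪ {τ, ∼(ρ τ)}).IsSatisfiable) ∧
      (∀ τ σ : L.Sentence, (PA ⊨ᵇ (τ ⟹ σ)) → (PA ⊨ᵇ (ρ τ ⟹ ρ σ))) := by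
  rintro ⟨ρ, hind, hmono⟩
  have hnot : (PA ∪ {∼(ρ ⊤)}).IsSatisfiable :=
    (hind ⊤ (hPA.union_singleton_of_models Theory.models_top)).2.mono
      (Set.union_subset_union_right PA (by simp))
  have hboth : (PA ∪ {∼(ρ ⊤), ρ (∼(ρ ⊤))}).IsSatisfiable := (hind _ hnot).1
  exact Theory.not_isSatisfiable_union_of_models_imp
    (hmono _ _ (Theory.models_imp_of_models Theory.models_top)) hboth
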